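/- arXiv:1207.3620 — 5 statements merged into one kernel-verified Lean document; each statement's English description precedes it below -/
import Mathlib

section
/- Let 1 < p < ∞ with conjugate exponent p'. If K is a relatively p-compact subset of a Banach space X, then K is a p-limited subset of X. -/
/-!
Given functionals `fₙ` with `∑ₙ |fₙ z|^p < ∞` for every `z`, the map `z ↦ (fₙ z)ₙ` is a bounded
operator `X → ℓ^p` by the closed graph theorem. Applied to a sequence `xₖ` with
`∑ₖ ‖xₖ‖^p < ∞` this makes the double series `∑ₙ ∑ₖ |fₙ xₖ|^p` converge, so the row norms
`Aₙ = ‖(fₙ xₖ)ₖ‖_p` form a `p`-summable sequence. For `z = ∑ₖ αₖ xₖ` with `‖α‖_{p'} ≤ 1`,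
Hölder's inequality gives `|fₙ z| ≤ ‖α‖_{p'} Aₙ ≤ Aₙ`.
-/

open NormedSpace ENNReal

noncomputable section

/-- A set `S` is `p`-limited if for every sequence `f` of functionals with
`∑ₙ |fₙ z|^p < ∞` for all `z`, there is a nonnegative `p`-summable sequence `α`
dominating `|fₙ z|` uniformly for `z ∈ S`. -/
def PLimited (p : ℝ) {X : Type*} [NormedAddCommGroup X] [NormedSpace ℝ X]
    (S : Set X) : Prop :=
  ∀ f : ℕ → StrongDual ℝ X, (∀ z : X, Summable fun n => |f n z| ^ p) →
    ∃ α : ℕ → ℝ, (∀ n, 0 ≤ α n) ∧ (Summable fun n => α n ^ p) ∧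
      ∀ z ∈ S, ∀ n, |f n z| ≤ α n

section lpPi

variable {𝕜 X ι : Type*} {E : ι → Type*} [NontriviallyNormedField 𝕜]
  [NormedAddCommGroup X] [NormedSpace 𝕜 X]
  [∀ i, NormedAddCommGroup (E i)] [∀ i, NormedSpace 𝕜 (E i)] {p : ℝ≥0∞} [Fact (1 ≤ p)]

def lpPiₗ (f : ∀ i, X →L[𝕜] E i) (hf : ∀ z, Memℓp (fun i => f i z) p) :
    X →ₗ[𝕜] lp E p where
  toFun z := ⟨fun i => f i z, hf z⟩
  map_add' a b := lp.ext <| funext fun i => (f i).map_add a b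
  map_smul' c a := lp.ext <| funext fun i => (f i).map_smul c a

/-- Closed graph theorem: the graph is closed because every coordinate `f i` is continuous. -/
def lpPi [CompleteSpace X] [∀ i, CompleteSpace (E i)] (f : ∀ i, X →L[𝕜] E i)
    (hf : ∀ z, Memℓp (fun i => f i z) p) : X →L[𝕜] lp E p :=
  .ofSeqClosedGraph (g := lpPiₗ f hf) fun _u z y hu hy => lp.ext <| funext fun i =>
    tendsto_nhds_unique (((lp.evalCLM 𝕜 E p i).continuous.tendsto y).comp hy)
      (((f i).continuous.tendsto z).comp hu)

end lpPi

theorem ContinuousLinearMap.summable_norm_rpow_comp {𝕜 E F κ : Type*} [NontriviallyNormedField 𝕜]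
    [SeminormedAddCommGroup E] [SeminormedAddCommGroup F] [NormedSpace 𝕜 E] [NormedSpace 𝕜 F]
    (T : E →L[𝕜] F) {p : ℝ} (hp : 0 ≤ p) {x : κ → E} (hx : Summable fun k => ‖x k‖ ^ p) :
    Summable fun k => ‖T (x k)‖ ^ p := by
  refine .of_nonneg_of_le (fun _ => by positivity) (fun k => ?_) (hx.mul_left (‖T‖ ^ p))
  rw [← Real.mul_rpow (norm_nonneg _) (norm_nonneg _)]
  exact Real.rpow_le_rpow (norm_nonneg _) (T.le_opNorm _) hp

theorem summable_norm_rpow_apply_prod {𝕜 X ι κ : Type*} {E : ι → Type*} [NontriviallyNormedField 𝕜]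
    [NormedAddCommGroup X] [NormedSpace 𝕜 X] [CompleteSpace X]
    [∀ i, NormedAddCommGroup (E i)] [∀ i, NormedSpace 𝕜 (E i)] [∀ i, CompleteSpace (E i)]
    {p : ℝ} (hp : 1 ≤ p) (f : ∀ i, X →L[𝕜] E i) (hf : ∀ z, Summable fun i => ‖f i z‖ ^ p)
    {x : κ → X} (hx : Summable fun k => ‖x k‖ ^ p) :
    Summable fun q : ι × κ => ‖f q.1 (x q.2)‖ ^ p := by
  have hp' : (ENNReal.ofReal p).toReal = p := toReal_ofReal (zero_le_one.trans hp)
  have : Fact (1 ≤ ENNReal.ofReal p) := ⟨ENNReal.one_le_ofReal.2 hp⟩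
  let V := lpPi (p := .ofReal p) f fun z => memℓp_gen (by rw [hp']; exact hf z)
  have hV : ∀ z, ∑' i, ‖f i z‖ ^ p = ‖V z‖ ^ p := fun z => by
    have := lp.norm_rpow_eq_tsum (by rw [hp']; linarith) (V z)
    rw [hp'] at this
    exact this.symm
  have hswap : Summable fun q : κ × ι => ‖f q.2 (x q.1)‖ ^ p :=
    (summable_prod_of_nonneg fun _ => by positivity).2
      ⟨fun k => hf (x k), by simpa only [hV] using V.summable_norm_rpow_comp (by linarith) hx⟩
  exact hswap.prod_symm

theorem norm_le_norm_mul_of_hasSum_mul {ι R : Type*} [NormedRing R] {p q : ℝ}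
    (hpq : p.HolderConjugate q) (a : lp (fun _ : ι => R) (.ofReal q)) {b : ι → R}
    (hb : Summable fun k => ‖b k‖ ^ p) {s : R} (hs : HasSum (fun k => a k * b k) s) :
    ‖s‖ ≤ ‖a‖ * (∑' k, ‖b k‖ ^ p) ^ (1 / p) := by
  have hp : (ENNReal.ofReal p).toReal = p := toReal_ofReal hpq.nonneg
  have hq : (ENNReal.ofReal q).toReal = q := toReal_ofReal hpq.symm.nonneg
  let b' : lp (fun _ : ι => R) (.ofReal p) := ⟨b, memℓp_gen (by rwa [hp])⟩
  have hb' : ‖b'‖ = (∑' k, ‖b k‖ ^ p) ^ (1 / p) := by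
    simpa only [hp] using lp.norm_eq_tsum_rpow (by rw [hp]; exact hpq.pos) b'
  obtain ⟨hsum, hle⟩ := lp.tsum_mul_le_mul_norm (by rw [hp, hq]; exact hpq.symm) a b'
  rw [← hb', ← hs.tsum_eq]
  calc ‖∑' k, a k * b k‖ ≤ ∑' k, ‖a k‖ * ‖b k‖ :=
        tsum_of_norm_bounded hsum.hasSum fun k => norm_mul_le _ _
    _ ≤ ‖a‖ * ‖b'‖ := hle

theorem stmt_0_general {X : Type*} [NormedAddCommGroup X] [NormedSpace ℝ X] [CompleteSpace X]
    (p p' : ℝ) (hp : 1 < p) (hpq : 1 / p + 1 / p' = 1) (K : Set X)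
    (hK : ∃ x : ℕ → X, (Summable fun n => ‖x n‖ ^ p) ∧
      K ⊆ {y | ∃ α : lp (fun _ : ℕ => ℝ) (ENNReal.ofReal p'),
        ‖α‖ ≤ 1 ∧ HasSum (fun n => α n • x n) y}) :
    PLimited p K := by
  obtain ⟨x, hx, hKx⟩ := hK
  intro f hf
  simp only [← Real.norm_eq_abs] at hf ⊢
  have hpp' : p.HolderConjugate p' :=
    Real.holderConjugate_iff.2 ⟨hp, by simpa only [one_div] using hpq⟩
  obtain ⟨hrow, hrows⟩ := (summable_prod_of_nonneg fun _ => by positivity).1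
    (summable_norm_rpow_apply_prod hp.le f hf hx)
  refine ⟨fun n => (∑' k, ‖f n (x k)‖ ^ p) ^ (1 / p), fun n => by positivity, ?_, ?_⟩
  · refine hrows.congr fun n => ?_
    rw [← Real.rpow_mul (tsum_nonneg fun _ => by positivity), one_div_mul_cancel hpp'.ne_zero,
      Real.rpow_one]
  · intro z hz n
    obtain ⟨α, hα, hαz⟩ := hKx hz
    calc ‖f n z‖ ≤ ‖α‖ * (∑' k, ‖f n (x k)‖ ^ p) ^ (1 / p) :=
          norm_le_norm_mul_of_hasSum_mul hpp' α (hrow n) (by simpa using hαz.mapL (f n))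
      _ ≤ (∑' k, ‖f n (x k)‖ ^ p) ^ (1 / p) := mul_le_of_le_one_left (by positivity) hα

/-- Every relatively `p`-compact subset of a Banach space is `p`-limited. -/
theorem stmt_0 {X : Type*} [NormedAddCommGroup X] [NormedSpace ℝ X] [CompleteSpace X]
    (p p' : ℝ) (hp : 1 < p) (hpq : 1 / p + 1 / p' = 1)
    [Fact (1 ≤ ENNReal.ofReal p')] (K : Set X)
    (hK : ∃ x : ℕ → X, (Summable fun n => ‖x n‖ ^ p) ∧
      K ⊆ {y | ∃ α : lp (fun _ : ℕ => ℝ) (ENNReal.ofReal p'),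
        ‖α‖ ≤ 1 ∧ HasSum (fun n => α n • x n) y}) :
    PLimited p K :=
  stmt_0_general p p' hp hpq K hK
end
end

section
/- Let 1 < p < ∞ with conjugate exponent p' and let x = ⟨x_n⟩ be a weakly p-summable sequence in a Banach space X. Then the following are equivalent: (i) for every bounded linear operator T : X → ℓ_p, one has ∑_n ‖T x_n‖_{ℓ_p}^p < ∞; (ii) the adjoint E_x* : X* → (ℓ_{p'})* of the operator E_x : ℓ_{p'} → X is absolutely p-summing. -/
open NormedSpace ENNReal

noncomputable section

/-- A sequence `x` in a normed space is weakly `p`-summable if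
`∑ₙ |f (x n)|^p < ∞` for every continuous functional `f`. -/
def WeaklySummable (p : ℝ) {X : Type*} [NormedAddCommGroup X] [NormedSpace ℝ X]
    (x : ℕ → X) : Prop :=
  ∀ f : StrongDual ℝ X, Summable fun n => |f (x n)| ^ p

/-- A bounded operator `T` is absolutely `p`-summing if it maps weakly `p`-summable
sequences to norm `p`-summable sequences. -/
def AbsolutelySumming (p : ℝ) {X Y : Type*} [NormedAddCommGroup X] [NormedSpace ℝ X]
    [NormedAddCommGroup Y] [NormedSpace ℝ Y] (T : X →L[ℝ] Y) : Prop :=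
  ∀ x : ℕ → X, WeaklySummable p x → Summable fun n => ‖T (x n)‖ ^ p

/-- The adjoint (dual map) of a bounded operator: `dualMap T g = g ∘ T`. -/
def dualMap {X Y : Type*} [NormedAddCommGroup X] [NormedSpace ℝ X]
    [NormedAddCommGroup Y] [NormedSpace ℝ Y] (T : X →L[ℝ] Y) :
    StrongDual ℝ Y →L[ℝ] StrongDual ℝ X :=
  (ContinuousLinearMap.compL ℝ X Y ℝ).flip T

/-! For `f ∈ X*`, `‖E* f‖^p` and `∑ₖ |f xₖ|^p` bound each other: Hölder's inequality gives one
direction, and testing `E* f` against `∑ₖ sign(aₖ) |aₖ|^(p-1) eₖ`, `aₖ = f xₖ`, the other. The same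
test shows that the coordinate functionals of `ℓ_p` are weakly `p`-summable, so `fₙ = T* eₙ*` is
weakly `p`-summable for each `T : X → ℓ_p`; conversely a weakly `p`-summable `(fₙ)` in `X*` is of
this form for `T z = (fₙ z)ₙ`, which is bounded by the closed graph theorem. Then
`∑ₖ ‖T xₖ‖^p = ∑ₖ ∑ₙ |fₙ xₖ|^p` and `∑ₙ ‖E* fₙ‖^p ≍ ∑ₙ ∑ₖ |fₙ xₖ|^p`, and the two nonnegative
double sums are equal. -/

theorem abs_sum_mul_le_Lp_mul_Lq {ι : Type*} {p q : ℝ} (hpq : p.HolderConjugate q)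
    (s : Finset ι) (u v : ι → ℝ) :
    |∑ k ∈ s, u k * v k| ≤ (∑ k ∈ s, |u k| ^ p) ^ (1 / p) * (∑ k ∈ s, |v k| ^ q) ^ (1 / q) :=
  calc |∑ k ∈ s, u k * v k| ≤ ∑ k ∈ s, |u k| * |v k| := by
        simpa only [abs_mul] using Finset.abs_sum_le_sum_abs (fun k => u k * v k) s
    _ ≤ _ := by simpa only [abs_abs] using Real.inner_le_Lp_mul_Lq s (|u ·|) (|v ·|) hpq

theorem Real.HolderConjugate.le_rpow_of_le_mul_rpow {p q C t : ℝ} (hpq : p.HolderConjugate q)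
    (hC : 0 ≤ C) (ht : 0 ≤ t) (h : t ≤ C * t ^ (1 / q)) : t ≤ C ^ p := by
  rcases ht.eq_or_lt with rfl | ht
  · exact Real.rpow_nonneg hC p
  have hsplit : t = t ^ (1 / p) * t ^ (1 / q) := by
    rw [← Real.rpow_add ht, one_div, one_div, hpq.inv_add_inv_eq_one, Real.rpow_one]
  have hroot : t ^ (1 / p) ≤ C :=
    le_of_mul_le_mul_right (by rwa [← hsplit]) (Real.rpow_pos_of_pos ht (1 / q))
  calc t = (t ^ (1 / p)) ^ p := by rw [← Real.rpow_mul ht.le, one_div_mul_cancel hpq.ne_zero,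
        Real.rpow_one]
    _ ≤ C ^ p := Real.rpow_le_rpow (Real.rpow_nonneg ht.le _) hroot hpq.nonneg

theorem Real.sign_mul_abs_rpow_sub_one_mul_self {p : ℝ} (hp : p ≠ 0) (a : ℝ) :
    Real.sign a * |a| ^ (p - 1) * a = |a| ^ p := by
  rcases eq_or_ne a 0 with rfl | ha
  · simp [Real.zero_rpow hp]
  have hpow : |a| ^ p = |a| ^ (p - 1) * |a| := by
    rw [← Real.rpow_add_one (abs_ne_zero.mpr ha), sub_add_cancel]
  rcases ha.lt_or_gt with ha | ha
  · rw [Real.sign_of_neg ha, hpow, abs_of_neg ha]; ring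
  · rw [Real.sign_of_pos ha, hpow, abs_of_pos ha]; ring

theorem Real.HolderConjugate.abs_sign_mul_abs_rpow_sub_one_rpow {p q : ℝ}
    (hpq : p.HolderConjugate q) (a : ℝ) :
    |Real.sign a * |a| ^ (p - 1)| ^ q = |a| ^ p := by
  have hsign : |Real.sign a * |a| ^ (p - 1)| = |a| ^ (p - 1) := by
    rcases lt_trichotomy a 0 with ha | rfl | ha
    · simp [Real.sign_of_neg ha, abs_of_nonneg (Real.rpow_nonneg (abs_nonneg a) _)]
    · simp [Real.zero_rpow (sub_ne_zero.mpr hpq.lt.ne')]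
    · simp [Real.sign_of_pos ha, abs_of_nonneg (Real.rpow_nonneg (abs_nonneg a) _)]
  rw [hsign, ← Real.rpow_mul (abs_nonneg a), hpq.sub_one_mul_conj]

theorem summable_tsum_swap_of_nonneg {α β : Type*} {A : α → β → ℝ} (hA : ∀ a b, 0 ≤ A a b)
    (hrow : ∀ a, Summable (A a)) (hsum : Summable fun a => ∑' b, A a b) :
    Summable fun b => ∑' a, A a b := by
  have hprod : Summable (Function.uncurry A) :=
    (summable_prod_of_nonneg fun _ => hA _ _).mpr ⟨hrow, hsum⟩
  exact ((summable_prod_of_nonneg fun _ => hA _ _).mp hprod.prod_symm).2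

section WeakSummability

variable {Z W : Type*} [NormedAddCommGroup Z] [NormedSpace ℝ Z]
  [NormedAddCommGroup W] [NormedSpace ℝ W] {p q : ℝ}

theorem WeaklySummable.map {w : ℕ → Z} (hw : WeaklySummable p w) (S : Z →L[ℝ] W) :
    WeaklySummable p fun n => S (w n) :=
  fun G => hw (G.comp S)

theorem sum_abs_rpow_le_of_norm_sum_smul_le (hpq : p.HolderConjugate q) {w : ℕ → Z}
    (hw : ∀ (c : ℕ → ℝ) (s : Finset ℕ), ‖∑ k ∈ s, c k • w k‖ ≤ (∑ k ∈ s, |c k| ^ q) ^ (1 / q))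
    (β : StrongDual ℝ Z) (s : Finset ℕ) :
    ∑ k ∈ s, |β (w k)| ^ p ≤ ‖β‖ ^ p := by
  refine hpq.le_rpow_of_le_mul_rpow (norm_nonneg β) (by positivity) ?_
  set c : ℕ → ℝ := fun k => Real.sign (β (w k)) * |β (w k)| ^ (p - 1)
  calc ∑ k ∈ s, |β (w k)| ^ p = β (∑ k ∈ s, c k • w k) := by
        simp only [map_sum, map_smul, smul_eq_mul, c,
          Real.sign_mul_abs_rpow_sub_one_mul_self hpq.ne_zero]
    _ ≤ ‖β‖ * ‖∑ k ∈ s, c k • w k‖ := (le_abs_self _).trans (β.le_opNorm _)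
    _ ≤ ‖β‖ * (∑ k ∈ s, |c k| ^ q) ^ (1 / q) := by gcongr; exact hw c s
    _ = ‖β‖ * (∑ k ∈ s, |β (w k)| ^ p) ^ (1 / q) := by
        simp only [c, hpq.abs_sign_mul_abs_rpow_sub_one_rpow]

theorem weaklySummable_of_norm_sum_smul_le (hpq : p.HolderConjugate q) {w : ℕ → Z}
    (hw : ∀ (c : ℕ → ℝ) (s : Finset ℕ), ‖∑ k ∈ s, c k • w k‖ ≤ (∑ k ∈ s, |c k| ^ q) ^ (1 / q)) :
    WeaklySummable p w := fun β =>
  summable_of_sum_le (fun _ => by positivity) (sum_abs_rpow_le_of_norm_sum_smul_le hpq hw β)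

end WeakSummability

namespace lp

variable {q : ℝ}

theorem norm_rpow_eq_tsum_abs_rpow (hq : 0 < q)
    (y : lp (fun _ : ℕ => ℝ) (ENNReal.ofReal q)) : ‖y‖ ^ q = ∑' n, |y n| ^ q := by
  simpa only [ENNReal.toReal_ofReal hq.le, Real.norm_eq_abs] using
    lp.norm_rpow_eq_tsum (by rwa [ENNReal.toReal_ofReal hq.le]) y

theorem rpow_sum_abs_rpow_le_norm (hq : 0 < q)
    (y : lp (fun _ : ℕ => ℝ) (ENNReal.ofReal q)) (s : Finset ℕ) :
    (∑ n ∈ s, |y n| ^ q) ^ (1 / q) ≤ ‖y‖ := by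
  have hsum : ∑ n ∈ s, |y n| ^ q ≤ ‖y‖ ^ q := by
    simpa only [ENNReal.toReal_ofReal hq.le, Real.norm_eq_abs] using
      lp.sum_rpow_le_norm_rpow (by rwa [ENNReal.toReal_ofReal hq.le]) y s
  calc (∑ n ∈ s, |y n| ^ q) ^ (1 / q) ≤ (‖y‖ ^ q) ^ (1 / q) := by gcongr
    _ = ‖y‖ := by rw [one_div, Real.rpow_rpow_inv (lp.norm_nonneg' y) hq.ne']

theorem norm_sum_smul_single_one [Fact (1 ≤ ENNReal.ofReal q)] (hq : 0 < q)
    (c : ℕ → ℝ) (s : Finset ℕ) :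
    ‖∑ k ∈ s, c k • lp.single (E := fun _ : ℕ => ℝ) (ENNReal.ofReal q) k 1‖ =
      (∑ k ∈ s, |c k| ^ q) ^ (1 / q) := by
  have hnorm := lp.norm_sum_single (E := fun _ : ℕ => ℝ) (p := ENNReal.ofReal q)
    (by rwa [ENNReal.toReal_ofReal hq.le]) c s
  simp only [ENNReal.toReal_ofReal hq.le, Real.norm_eq_abs] at hnorm
  simp only [← lp.single_smul, smul_eq_mul, mul_one]
  rw [← hnorm, one_div, Real.rpow_rpow_inv (norm_nonneg _) hq.ne']

theorem norm_sum_smul_evalCLM_le {p : ℝ} (hpq : p.HolderConjugate q) [Fact (1 ≤ ENNReal.ofReal p)]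
    (c : ℕ → ℝ) (s : Finset ℕ) :
    ‖∑ n ∈ s, c n • lp.evalCLM ℝ (fun _ : ℕ => ℝ) (ENNReal.ofReal p) n‖ ≤
      (∑ n ∈ s, |c n| ^ q) ^ (1 / q) := by
  refine ContinuousLinearMap.opNorm_le_bound _ (by positivity) fun y => ?_
  calc ‖(∑ n ∈ s, c n • lp.evalCLM ℝ (fun _ : ℕ => ℝ) (ENNReal.ofReal p) n) y‖
        = |∑ n ∈ s, c n * y n| := by simp [lp.evalCLM]
    _ ≤ (∑ n ∈ s, |c n| ^ q) ^ (1 / q) * (∑ n ∈ s, |y n| ^ p) ^ (1 / p) :=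
        abs_sum_mul_le_Lp_mul_Lq hpq.symm s c (y ·)
    _ ≤ (∑ n ∈ s, |c n| ^ q) ^ (1 / q) * ‖y‖ := by
        gcongr; exact rpow_sum_abs_rpow_le_norm hpq.pos y s

end lp

section Operators

variable {X : Type*} [NormedAddCommGroup X] [NormedSpace ℝ X] {p q : ℝ}

theorem dualMap_apply {Y : Type*} [NormedAddCommGroup Y] [NormedSpace ℝ Y] (T : X →L[ℝ] Y)
    (g : StrongDual ℝ Y) : dualMap T g = g.comp T :=
  rfl

variable [Fact (1 ≤ ENNReal.ofReal q)] {x : ℕ → X}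
  {E : lp (fun _ : ℕ => ℝ) (ENNReal.ofReal q) →L[ℝ] X}

theorem apply_single_one_of_hasSum (hE : ∀ α, HasSum (fun n => α n • x n) (E α)) (k : ℕ) :
    E (lp.single (ENNReal.ofReal q) k 1) = x k := by
  refine (hE _).unique ?_
  convert hasSum_ite_eq k (x k) using 2 with n
  by_cases hn : n = k <;> simp [hn]

theorem norm_comp_le_of_hasSum (hpq : p.HolderConjugate q)
    (hE : ∀ α, HasSum (fun n => α n • x n) (E α)) (f : StrongDual ℝ X)
    (hf : Summable fun k => |f (x k)| ^ p) :
    ‖f.comp E‖ ≤ (∑' k, |f (x k)| ^ p) ^ (1 / p) := by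
  refine ContinuousLinearMap.opNorm_le_bound _ (by positivity) fun α => ?_
  have hsum : HasSum (fun k => α k * f (x k)) (f (E α)) := by
    simpa only [map_smul, smul_eq_mul] using (hE α).mapL f
  refine le_of_tendsto ((continuous_abs.tendsto _).comp hsum) (.of_forall fun s => ?_)
  calc |∑ k ∈ s, α k * f (x k)|
      ≤ (∑ k ∈ s, |α k| ^ q) ^ (1 / q) * (∑ k ∈ s, |f (x k)| ^ p) ^ (1 / p) :=
        abs_sum_mul_le_Lp_mul_Lq hpq.symm s (α ·) _
    _ ≤ ‖α‖ * (∑' k, |f (x k)| ^ p) ^ (1 / p) := by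
        gcongr
        · exact lp.rpow_sum_abs_rpow_le_norm hpq.symm.pos α s
        · exact hpq.one_div_nonneg
        · exact hf.sum_le_tsum s fun k _ => by positivity
    _ = (∑' k, |f (x k)| ^ p) ^ (1 / p) * ‖α‖ := mul_comm _ _

end Operators

namespace WeaklySummable

variable {X : Type*} [NormedAddCommGroup X] [NormedSpace ℝ X] {p : ℝ}
  [Fact (1 ≤ ENNReal.ofReal p)] {f : ℕ → StrongDual ℝ X}

theorem memℓp_apply (hf : WeaklySummable p f) (z : X) :
    Memℓp (fun n => f n z) (ENNReal.ofReal p) := by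
  have hp : 0 ≤ p := zero_le_one.trans (ENNReal.one_le_ofReal.mp Fact.out)
  refine memℓp_gen ?_
  simpa only [ENNReal.toReal_ofReal hp, Real.norm_eq_abs, dual_def] using
    hf (inclusionInDoubleDual ℝ X z)

def toLpCLM [CompleteSpace X] (hf : WeaklySummable p f) :
    X →L[ℝ] lp (fun _ : ℕ => ℝ) (ENNReal.ofReal p) :=
  let F : X →ₗ[ℝ] lp (fun _ : ℕ => ℝ) (ENNReal.ofReal p) :=
    { toFun z := ⟨fun n => f n z, hf.memℓp_apply z⟩
      map_add' z w := lp.ext <| funext fun n => map_add (f n) z w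
      map_smul' c z := lp.ext <| funext fun n => map_smul (f n) c z }
  ⟨F, F.continuous_of_seq_closed_graph fun _ z y hu hy => lp.ext <| funext fun n =>
    tendsto_nhds_unique
      (((lp.evalCLM ℝ (fun _ : ℕ => ℝ) (ENNReal.ofReal p) n).continuous.tendsto y).comp hy)
      (((f n).continuous.tendsto z).comp hu)⟩

@[simp]
theorem toLpCLM_apply [CompleteSpace X] (hf : WeaklySummable p f) (z : X) (n : ℕ) :
    hf.toLpCLM z n = f n z :=
  rfl

end WeaklySummable

section Equivalence

variable {X : Type*} [NormedAddCommGroup X] [NormedSpace ℝ X] {p q : ℝ}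
  [Fact (1 ≤ ENNReal.ofReal p)] [Fact (1 ≤ ENNReal.ofReal q)] {x : ℕ → X}
  {E : lp (fun _ : ℕ => ℝ) (ENNReal.ofReal q) →L[ℝ] X}

theorem absolutelySumming_dualMap_of_forall_summable [CompleteSpace X]
    (hpq : p.HolderConjugate q) (hx : WeaklySummable p x)
    (hE : ∀ α, HasSum (fun n => α n • x n) (E α))
    (hT : ∀ T : X →L[ℝ] lp (fun _ : ℕ => ℝ) (ENNReal.ofReal p),
      Summable fun n => ‖T (x n)‖ ^ p) :
    AbsolutelySumming p (dualMap E) := by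
  intro f hf
  have hcols : Summable fun n => ∑' k, |f n (x k)| ^ p := by
    refine summable_tsum_swap_of_nonneg (fun _ _ => by positivity)
      (fun k => by simpa only [dual_def] using hf (inclusionInDoubleDual ℝ X (x k))) ?_
    simpa only [lp.norm_rpow_eq_tsum_abs_rpow hpq.pos, WeaklySummable.toLpCLM_apply] using
      hT hf.toLpCLM
  refine hcols.of_nonneg_of_le (fun _ => by positivity) fun n => ?_
  calc ‖dualMap E (f n)‖ ^ p ≤ ((∑' k, |f n (x k)| ^ p) ^ (1 / p)) ^ p :=
        Real.rpow_le_rpow (norm_nonneg _) (norm_comp_le_of_hasSum hpq hE (f n) (hx (f n)))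
          hpq.nonneg
    _ = ∑' k, |f n (x k)| ^ p := by
        rw [one_div, Real.rpow_inv_rpow (by positivity) hpq.ne_zero]

theorem summable_of_absolutelySumming_dualMap (hpq : p.HolderConjugate q)
    (hE : ∀ α, HasSum (fun n => α n • x n) (E α)) (hE' : AbsolutelySumming p (dualMap E))
    (T : X →L[ℝ] lp (fun _ : ℕ => ℝ) (ENNReal.ofReal p)) :
    Summable fun k => ‖T (x k)‖ ^ p := by
  set f : ℕ → StrongDual ℝ X :=
    fun n => dualMap T (lp.evalCLM ℝ (fun _ : ℕ => ℝ) (ENNReal.ofReal p) n)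
  have hf : WeaklySummable p f :=
    (weaklySummable_of_norm_sum_smul_le hpq (lp.norm_sum_smul_evalCLM_le hpq)).map (dualMap T)
  have hrow (n : ℕ) (s : Finset ℕ) : ∑ k ∈ s, |f n (x k)| ^ p ≤ ‖dualMap E (f n)‖ ^ p := by
    simpa only [dualMap_apply, ContinuousLinearMap.comp_apply, apply_single_one_of_hasSum hE] using
      sum_abs_rpow_le_of_norm_sum_smul_le hpq
        (fun c s => (lp.norm_sum_smul_single_one hpq.symm.pos c s).le) (dualMap E (f n)) s
  have hrows : Summable fun n => ∑' k, |f n (x k)| ^ p :=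
    (hE' f hf).of_nonneg_of_le (fun _ => by positivity)
      fun n => Real.tsum_le_of_sum_le (fun _ => by positivity) (hrow n)
  simp only [lp.norm_rpow_eq_tsum_abs_rpow hpq.pos]
  exact summable_tsum_swap_of_nonneg (fun _ _ => by positivity)
    (fun n => summable_of_sum_le (fun _ => by positivity) (hrow n)) hrows

end Equivalence

/-- For a weakly `p`-summable sequence `x` in `X` with associated operator
`E : ℓ_{p'} → X`, `⟨T xₙ⟩` is norm `p`-summable for every `T : X → ℓ_p` iff the
adjoint `E* : X* → (ℓ_{p'})*` is absolutely `p`-summing. -/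
theorem stmt_5 {X : Type*} [NormedAddCommGroup X] [NormedSpace ℝ X] [CompleteSpace X]
    (p p' : ℝ) (hp : 1 < p) (hpq : 1 / p + 1 / p' = 1)
    [Fact (1 ≤ ENNReal.ofReal p)] [Fact (1 ≤ ENNReal.ofReal p')]
    (x : ℕ → X) (hx : WeaklySummable p x)
    (E : lp (fun _ : ℕ => ℝ) (ENNReal.ofReal p') →L[ℝ] X)
    (hE : ∀ α : lp (fun _ : ℕ => ℝ) (ENNReal.ofReal p'),
      HasSum (fun n => α n • x n) (E α)) :
    (∀ T : X →L[ℝ] lp (fun _ : ℕ => ℝ) (ENNReal.ofReal p),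
        Summable fun n => ‖T (x n)‖ ^ p) ↔
      AbsolutelySumming p (dualMap E) := by
  have hconj : p.HolderConjugate p' :=
    Real.holderConjugate_iff.mpr ⟨hp, by simpa only [one_div] using hpq⟩
  exact ⟨absolutelySumming_dualMap_of_forall_summable hconj hx hE,
    summable_of_absolutelySumming_dualMap hconj hE⟩
end
end

section
/- Let 1 < p < ∞ and 1 < r < ∞. Then ℓ_p does not have the r-Dunford–Pettis property; that is, there exist a weakly r-summable sequence ⟨x_n⟩ in ℓ_p and a weakly r-summable sequence ⟨f_n⟩ in the dual (ℓ_p)* such that ∑_n ∑_k |f_k(x_n)|^r = ∞. -/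
/-! Let `q` be the exponent conjugate to `p`, and put `x n = (n + 1) ^ (-α) • e n`,
`f k = (k + 1) ^ (-β) • e* k` with `α = 1 / (p r)` and `β = 1 / (q r)`. Then
`f k (x n) = δ k n (n + 1) ^ (-(α + β))` and `α + β = 1 / r`, so the double sum is the harmonic
series.

The unit vectors `e n` are weakly `q`-summable and the coordinate functionals `e* k` weakly
`p`-summable: both are dominated by a unit vector basis of an `ℓ_s` (`s = p`, resp. `s = q`), and
testing a functional against the norming vector of its values shows that such a sequence is weakly
`t`-summable, `t` conjugate to `s`. Multiplying a weakly `q`-summable sequence by `(n + 1) ^ (-α)`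
makes it weakly `r`-summable once `α > 1 / r - 1 / q` (Hölder's inequality, or `ℓ_q ⊆ ℓ_r` when
`q ≤ r`), and `1 / (p r) > 1 / r - 1 / q` is exactly `r > 1`. -/

open NormedSpace ENNReal

noncomputable section

namespace Real

lemma summable_nat_add_one_rpow_neg {γ : ℝ} (hγ : 1 < γ) :
    Summable fun n : ℕ => ((n : ℝ) + 1) ^ (-γ) := by
  simpa using (summable_nat_add_iff 1).2 (summable_nat_rpow.2 (neg_lt_neg hγ))

lemma not_summable_nat_add_one_inv : ¬Summable fun n : ℕ => ((n : ℝ) + 1)⁻¹ := by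
  simpa using (summable_nat_add_iff 1).not.2 not_summable_natCast_inv

lemma summable_abs_rpow_of_le {c : ℕ → ℝ} {q r : ℝ} (hq : 0 < q) (hqr : q ≤ r)
    (hc : Summable fun n => |c n| ^ q) : Summable fun n => |c n| ^ r := by
  have memℓp_iff (s : ℝ) (hs : 0 < s) :
      Memℓp c (ENNReal.ofReal s) ↔ Summable fun n => |c n| ^ s := by
    simpa [hs.le, Real.norm_eq_abs] using memℓp_gen_iff (E := fun _ : ℕ => ℝ)
      (p := ENNReal.ofReal s) (by rwa [ENNReal.toReal_ofReal hs.le])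
  exact (memℓp_iff r (hq.trans_le hqr)).1 <|
    ((memℓp_iff q hq).2 hc).of_exponent_ge (ENNReal.ofReal_le_ofReal hqr)

lemma summable_abs_add_one_rpow_neg_mul {c : ℕ → ℝ} {q r α : ℝ} (hq : 0 < q) (hr : 0 < r)
    (hα : 0 ≤ α) (hαqr : r⁻¹ - q⁻¹ < α) (hc : Summable fun n => |c n| ^ q) :
    Summable fun n : ℕ => |((n : ℝ) + 1) ^ (-α) * c n| ^ r := by
  have hw (n : ℕ) : |((n : ℝ) + 1) ^ (-α) * c n| = ((n : ℝ) + 1) ^ (-α) * |c n| := by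
    rw [abs_mul, abs_of_pos (by positivity)]
  simp_rw [hw]
  rcases lt_or_ge r q with hrq | hqr
  · -- Hölder with `s⁻¹ = r⁻¹ - q⁻¹`; the weights are in `ℓ_s` exactly when `α > s⁻¹`
    have hs : 0 < r⁻¹ - q⁻¹ := sub_pos.2 (inv_strictAnti₀ hr hrq)
    have hsqr : HolderTriple (r⁻¹ - q⁻¹)⁻¹ q r := ⟨by simp, inv_pos.2 hs, hq⟩
    refine summable_Lr_of_Lp_Lq_of_nonneg hsqr (fun n => by positivity) (fun n => abs_nonneg _)
      ?_ hc
    have hγ : 1 < α * (r⁻¹ - q⁻¹)⁻¹ := by rwa [← div_eq_mul_inv, one_lt_div hs]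
    refine (summable_nat_add_one_rpow_neg hγ).congr fun n => ?_
    rw [← rpow_mul (by positivity), neg_mul]
  · refine (summable_abs_rpow_of_le hq hqr hc).of_nonneg_of_le (fun n => by positivity)
      fun n => ?_
    have hw1 : ((n : ℝ) + 1) ^ (-α) ≤ 1 :=
      rpow_le_one_of_one_le_of_nonpos (le_add_of_nonneg_left n.cast_nonneg) (neg_nonpos.2 hα)
    rw [mul_rpow (by positivity) (abs_nonneg _)]
    exact mul_le_of_le_one_left (by positivity) (rpow_le_one (by positivity) hw1 hr.le)

lemma le_rpow_of_le_mul_rpow {S C s t : ℝ} (hst : s.HolderConjugate t) (hS : 0 ≤ S) (hC : 0 ≤ C)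
    (h : S ≤ C * S ^ s⁻¹) : S ≤ C ^ t := by
  rcases hS.eq_or_lt with rfl | hS
  · positivity
  have hSt : S ^ t⁻¹ ≤ C := by
    have : S ^ t⁻¹ * S ^ s⁻¹ = S := by
      rw [← rpow_add hS, add_comm, hst.inv_add_inv_eq_one, rpow_one]
    nlinarith [rpow_pos_of_pos hS s⁻¹]
  calc S = (S ^ t⁻¹) ^ t := (rpow_inv_rpow hS.le hst.symm.ne_zero).symm
    _ ≤ C ^ t := rpow_le_rpow (by positivity) hSt hst.symm.nonneg

lemma HolderConjugate.inv_sub_inv_lt_mul_inv {p q r : ℝ} (hpq : p.HolderConjugate q)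
    (hr : 1 < r) : r⁻¹ - q⁻¹ < (p * r)⁻¹ := by
  have hr' : r⁻¹ < 1 := inv_lt_one_of_one_lt₀ hr
  have := hpq.inv_add_inv_eq_one
  have := hpq.symm.inv_pos
  rw [mul_inv]
  nlinarith

end Real

section WeaklySummable

variable {X : Type*} [NormedAddCommGroup X] [NormedSpace ℝ X]

theorem weaklySummable_of_norm_sum_smul_le_s13 {s t : ℝ} (hst : s.HolderConjugate t) {v : ℕ → X}
    (hv : ∀ (u : ℕ → ℝ) (A : Finset ℕ), ‖∑ k ∈ A, u k • v k‖ ≤ (∑ k ∈ A, |u k| ^ s) ^ s⁻¹) :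
    WeaklySummable t v := by
  intro F
  refine summable_of_sum_le (c := ‖F‖ ^ t) (fun n => by positivity) fun A => ?_
  -- test `F` against `u = c |c| ^ (t - 2)`, which gives equality in Hölder's inequality
  set c : ℕ → ℝ := fun n => F (v n)
  set u : ℕ → ℝ := fun n => c n * |c n| ^ (t - 1 - 1)
  have hpow (x : ℝ) {k : ℝ} (hk : k ≠ 0) : |x| ^ (k - 1) * |x| = |x| ^ k := by
    rw [← Real.rpow_add_one' (abs_nonneg x) (by rwa [sub_add_cancel]), sub_add_cancel]
  have huc (n : ℕ) : u n * c n = |c n| ^ t := by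
    calc u n * c n = |c n| ^ (t - 1 - 1) * |c n| * |c n| := by
          rw [mul_assoc _ |c n|, abs_mul_abs_self]; ring
      _ = |c n| ^ t := by rw [hpow _ hst.symm.sub_one_ne_zero, hpow _ hst.symm.ne_zero]
  have hu (n : ℕ) : |u n| ^ s = |c n| ^ t := by
    rw [abs_mul, abs_of_nonneg (Real.rpow_nonneg (abs_nonneg (c n)) _), mul_comm,
      hpow _ hst.symm.sub_one_ne_zero, ← Real.rpow_mul (abs_nonneg _), hst.symm.sub_one_mul_conj]
  refine Real.le_rpow_of_le_mul_rpow hst (by positivity) (norm_nonneg F) ?_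
  calc ∑ n ∈ A, |c n| ^ t = F (∑ n ∈ A, u n • v n) := by
        simp only [map_sum, map_smul, smul_eq_mul]
        exact Finset.sum_congr rfl fun n _ => (huc n).symm
    _ ≤ ‖F‖ * ‖∑ n ∈ A, u n • v n‖ := (le_abs_self _).trans (F.le_opNorm _)
    _ ≤ ‖F‖ * (∑ n ∈ A, |c n| ^ t) ^ s⁻¹ := by
      gcongr
      simpa only [hu] using hv u A

theorem WeaklySummable.add_one_rpow_neg_smul {q r α : ℝ} {v : ℕ → X} (hv : WeaklySummable q v)
    (hq : 0 < q) (hr : 0 < r) (hα : 0 ≤ α) (hαqr : r⁻¹ - q⁻¹ < α) :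
    WeaklySummable r fun n => ((n : ℝ) + 1) ^ (-α) • v n := by
  intro F
  simpa only [map_smul, smul_eq_mul] using
    Real.summable_abs_add_one_rpow_neg_mul hq hr hα hαqr (hv F)

end WeaklySummable

namespace lp

variable {P : ℝ≥0∞} [Fact (1 ≤ P)]

theorem norm_sum_smul_single_one_s13 (hP : 0 < P.toReal) (u : ℕ → ℝ) (A : Finset ℕ) :
    ‖∑ k ∈ A, u k • lp.single (E := fun _ : ℕ => ℝ) P k 1‖ =
      (∑ k ∈ A, |u k| ^ P.toReal) ^ P.toReal⁻¹ := by
  simp_rw [← lp.single_smul, smul_eq_mul, mul_one, ← Real.norm_eq_abs, ← lp.norm_sum_single hP,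
    Real.rpow_rpow_inv (norm_nonneg _) hP.ne']

theorem weaklySummable_single_one {q : ℝ} (hPq : P.toReal.HolderConjugate q) :
    WeaklySummable q fun n => lp.single (E := fun _ : ℕ => ℝ) P n 1 :=
  weaklySummable_of_norm_sum_smul_le_s13 hPq fun u A => (norm_sum_smul_single_one_s13 hPq.pos u A).le

theorem norm_sum_smul_evalCLM_le_s13 {q : ℝ} (hPq : P.toReal.HolderConjugate q) (u : ℕ → ℝ)
    (A : Finset ℕ) :
    ‖∑ k ∈ A, u k • lp.evalCLM ℝ (fun _ : ℕ => ℝ) P k‖ ≤ (∑ k ∈ A, |u k| ^ q) ^ q⁻¹ := by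
  refine ContinuousLinearMap.opNorm_le_bound _ (by positivity) fun x => ?_
  have hx : (∑ k ∈ A, |x k| ^ P.toReal) ^ P.toReal⁻¹ ≤ ‖x‖ :=
    (Real.rpow_inv_le_iff_of_pos (by positivity) (norm_nonneg x) hPq.pos).2
      (lp.sum_rpow_le_norm_rpow hPq.pos x A)
  calc ‖(∑ k ∈ A, u k • lp.evalCLM ℝ (fun _ : ℕ => ℝ) P k) x‖ = |∑ k ∈ A, u k * x k| := by
        simp [lp.evalCLM]
    _ ≤ ∑ k ∈ A, |u k| * |x k| := by
        simpa only [abs_mul] using Finset.abs_sum_le_sum_abs (fun k => u k * x k) A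
    _ ≤ (∑ k ∈ A, |u k| ^ q) ^ q⁻¹ * (∑ k ∈ A, |x k| ^ P.toReal) ^ P.toReal⁻¹ := by
        simpa only [one_div] using Real.inner_le_Lp_mul_Lq_of_nonneg A hPq.symm
          (fun k _ => abs_nonneg (u k)) (fun k _ => abs_nonneg (x k))
    _ ≤ (∑ k ∈ A, |u k| ^ q) ^ q⁻¹ * ‖x‖ := by gcongr

theorem weaklySummable_evalCLM (hP : 1 < P.toReal) :
    WeaklySummable P.toReal (lp.evalCLM ℝ (fun _ : ℕ => ℝ) P) :=
  have hPq := Real.HolderConjugate.conjExponent hP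
  weaklySummable_of_norm_sum_smul_le_s13 hPq.symm (norm_sum_smul_evalCLM_le_s13 hPq)

theorem tsum_abs_smul_evalCLM_smul_single_one_rpow (a b : ℕ → ℝ) {r : ℝ} (hr : r ≠ 0)
    (n : ℕ) :
    ∑' k, |(b k • lp.evalCLM ℝ (fun _ : ℕ => ℝ) P k) (a n • lp.single P n 1)| ^ r =
      |b n * a n| ^ r := by
  rw [tsum_eq_single n fun k hk => ?_]
  · simp [lp.evalCLM, mul_comm]
  · simp [lp.evalCLM, Pi.single_eq_of_ne hk, Real.zero_rpow hr]

end lp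

/-- For `1 < p < ∞` and `1 < r < ∞`, `ℓ_p` does not have the `r`-Dunford–Pettis
property. -/
theorem stmt_13 (p r : ℝ) (hp : 1 < p) (hr : 1 < r)
    [Fact (1 ≤ ENNReal.ofReal p)] :
    ∃ x : ℕ → lp (fun _ : ℕ => ℝ) (ENNReal.ofReal p),
      ∃ f : ℕ → StrongDual ℝ (lp (fun _ : ℕ => ℝ) (ENNReal.ofReal p)),
        WeaklySummable r x ∧ WeaklySummable r f ∧
          ¬ Summable fun n => ∑' k, |f k (x n)| ^ r := by
  have hP : (ENNReal.ofReal p).toReal = p := ENNReal.toReal_ofReal (by linarith)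
  obtain ⟨q, hpq⟩ : ∃ q, p.HolderConjugate q := ⟨_, .conjExponent hp⟩
  have hr₀ : 0 < r := by linarith
  set a : ℕ → ℝ := fun n => ((n : ℝ) + 1) ^ (-(p * r)⁻¹)
  set b : ℕ → ℝ := fun k => ((k : ℝ) + 1) ^ (-(q * r)⁻¹)
  refine ⟨fun n => a n • lp.single _ n 1, fun k => b k • lp.evalCLM ℝ _ _ k, ?_, ?_, ?_⟩
  · exact (lp.weaklySummable_single_one (by rwa [hP])).add_one_rpow_neg_smul hpq.symm.pos hr₀
      (by positivity) (hpq.inv_sub_inv_lt_mul_inv hr)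
  · refine (lp.weaklySummable_evalCLM (by rwa [hP])).add_one_rpow_neg_smul
      (by rw [hP]; positivity) hr₀ ?_ ?_
    · exact (inv_pos.2 (mul_pos hpq.symm.pos hr₀)).le
    · simpa only [hP] using hpq.symm.inv_sub_inv_lt_mul_inv hr
  · simp only [lp.tsum_abs_smul_evalCLM_smul_single_one_rpow a b hr₀.ne']
    convert Real.not_summable_nat_add_one_inv using 3 with n
    have hexp : (-(q * r)⁻¹ + -(p * r)⁻¹) * r = -1 := by
      rw [← neg_add, mul_inv, mul_inv, ← add_mul, add_comm, hpq.inv_add_inv_eq_one, one_mul,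
        neg_mul, inv_mul_cancel₀ hr₀.ne']
    rw [← Real.rpow_add (by positivity), abs_of_pos (by positivity),
      ← Real.rpow_mul (by positivity), hexp, Real.rpow_neg_one]
end
end

section
/- Let 1 < p < ∞ with conjugate exponent p', let 1 ≤ s < p', and let t be defined by 1/t = 1/s − 1/p'. If ⟨α_n⟩ ∈ ℓ_t, then the sequence ⟨α_n e_n⟩ is weakly s-summable in ℓ_p, where e_n denotes the n-th standard unit vector of ℓ_p. -/
/-!
A functional `f` on `ℓ_p` has coefficients `βₙ = f eₙ` in `ℓ_{p'}`: testing `f` on the finitely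
supported vector `∑ sign βₙ |βₙ|^(p'-1) eₙ`, whose `p`-th power norm equals `∑ |βₙ|^{p'}`, gives
`(∑ |βₙ|^{p'})^{1/p'} ≤ ‖f‖`. Since `f (αₙ eₙ) = αₙ βₙ` and `1/s = 1/t + 1/p'`, Hölder's inequality
for the exponent triple `(t, p', s)` puts `αₙ βₙ` in `ℓ_s`.
-/

open NormedSpace ENNReal

noncomputable section

lemma abs_sign_mul_abs_rpow {r : ℝ} (hr : 0 < r) (b : ℝ) :
    |(SignType.sign b : ℝ) * |b| ^ r| = |b| ^ r := by
  rcases lt_trichotomy b 0 with hb | rfl | hb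
  · simp [sign_neg hb]; positivity
  · simp [hr.ne']
  · simp [sign_pos hb]; positivity

lemma sign_mul_abs_rpow_sub_one_mul {r : ℝ} (hr : r ≠ 0) (b : ℝ) :
    (SignType.sign b : ℝ) * |b| ^ (r - 1) * b = |b| ^ r := by
  rw [mul_right_comm, sign_mul_self, ← Real.rpow_one_add' (abs_nonneg b) (by simpa using hr),
    add_sub_cancel]

lemma Real.HolderConjugate.le_rpow_of_le_mul_rpow_inv {p q S C : ℝ} (hpq : p.HolderConjugate q)
    (hS : 0 ≤ S) (hC : 0 ≤ C) (h : S ≤ C * S ^ p⁻¹) : S ≤ C ^ q := by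
  rcases hS.eq_or_lt with rfl | hSpos
  · exact Real.rpow_nonneg hC q
  have hSq : S ^ q⁻¹ ≤ C := by
    have hSp : 0 < S ^ p⁻¹ := Real.rpow_pos_of_pos hSpos _
    have : S ^ q⁻¹ * S ^ p⁻¹ = S := by
      rw [← Real.rpow_add hSpos, add_comm, hpq.inv_add_inv_eq_one, Real.rpow_one]
    exact le_of_mul_le_mul_right (this.le.trans h) hSp
  calc S = (S ^ q⁻¹) ^ q := by
        rw [← Real.rpow_mul hS, inv_mul_cancel₀ hpq.symm.ne_zero, Real.rpow_one]
    _ ≤ C ^ q := Real.rpow_le_rpow (Real.rpow_nonneg hS _) hSq hpq.symm.nonneg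

section lpDual

variable {ι : Type*} [DecidableEq ι] {p : ℝ≥0∞} [Fact (1 ≤ p)] {q : ℝ}

lemma sum_abs_apply_single_rpow_le (hpq : p.toReal.HolderConjugate q)
    (f : StrongDual ℝ (lp (fun _ : ι => ℝ) p)) (F : Finset ι) :
    ∑ i ∈ F, |f (lp.single p i 1)| ^ q ≤ ‖f‖ ^ q := by
  set β := fun i => f (lp.single p i 1)
  set S := ∑ i ∈ F, |β i| ^ q
  set x : lp (fun _ : ι => ℝ) p :=
    ∑ i ∈ F, lp.single p i ((SignType.sign (β i) : ℝ) * |β i| ^ (q - 1))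
  have hfx : f x = S := by
    refine (map_sum f _ F).trans (Finset.sum_congr rfl fun i _ => ?_)
    rw [← mul_one ((SignType.sign (β i) : ℝ) * _), ← smul_eq_mul, lp.single_smul, map_smul,
      smul_eq_mul, sign_mul_abs_rpow_sub_one_mul hpq.symm.ne_zero]
  have hxS : ‖x‖ ^ p.toReal = S := by
    rw [lp.norm_sum_single hpq.pos]
    refine Finset.sum_congr rfl fun i _ => ?_
    rw [Real.norm_eq_abs, abs_sign_mul_abs_rpow hpq.symm.sub_one_pos,
      ← Real.rpow_mul (abs_nonneg _), hpq.symm.sub_one_mul_conj]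
  have hx : ‖x‖ = S ^ p.toReal⁻¹ := by
    rw [← hxS, Real.rpow_rpow_inv (norm_nonneg x) hpq.ne_zero]
  refine hpq.le_rpow_of_le_mul_rpow_inv (by positivity) (norm_nonneg f) ?_
  calc S = f x := hfx.symm
    _ ≤ ‖f‖ * ‖x‖ := (le_abs_self _).trans (f.le_opNorm x)
    _ = ‖f‖ * S ^ p.toReal⁻¹ := by rw [hx]

theorem summable_abs_apply_single_rpow (hpq : p.toReal.HolderConjugate q)
    (f : StrongDual ℝ (lp (fun _ : ι => ℝ) p)) :
    Summable fun i => |f (lp.single p i 1)| ^ q :=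
  summable_of_sum_le (fun _ => by positivity) (sum_abs_apply_single_rpow_le hpq f)

end lpDual

/-- If `1 ≤ s < p'`, `1/t = 1/s - 1/p'` and `⟨αₙ⟩ ∈ ℓ_t`, then `⟨αₙ eₙ⟩` is weakly
`s`-summable in `ℓ_p`. -/
theorem stmt_14 (p p' s t : ℝ) (hp : 1 < p) (hpq : 1 / p + 1 / p' = 1)
    (hs : 1 ≤ s) (hsp : s < p') (ht : 1 / t = 1 / s - 1 / p')
    [Fact (1 ≤ ENNReal.ofReal p)]
    (α : ℕ → ℝ) (hα : Summable fun n => |α n| ^ t) :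
    WeaklySummable s
      (fun n => α n • lp.single (ENNReal.ofReal p) n (1 : ℝ)) := by
  intro f
  have hs0 : 0 < s := by linarith
  have hp' : 0 < p' := by linarith
  have hpp' : (ENNReal.ofReal p).toReal.HolderConjugate p' := by
    rw [ENNReal.toReal_ofReal (by linarith), Real.holderConjugate_iff]
    exact ⟨hp, by simpa using hpq⟩
  have htp's : t.HolderTriple p' s := by
    have ht0 : 0 < 1 / t := by
      rw [ht, sub_pos]; exact one_div_lt_one_div_of_lt hs0 hsp
    exact ⟨by simp only [one_div] at ht; linarith, one_div_pos.mp ht0, hp'⟩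
  simpa [abs_mul] using Real.summable_Lr_of_Lp_Lq_of_nonneg htp's (fun _ => abs_nonneg _)
    (fun _ => abs_nonneg _) hα (summable_abs_apply_single_rpow hpp' f)
end
end

section
/- Let ⟨α_n⟩ be a sequence of elements of ℓ_1 with C := ∑_n ‖α_n‖_{ℓ_1} < ∞, and let E_α : c₀ → ℓ_1 be the bounded linear operator E_α(β) = ∑_n β(n) α_n. Then E_α is absolutely 1-summing with constant C: for every finite family β_1, …, β_m in c₀, ∑_{i=1}^m ‖E_α(β_i)‖_{ℓ_1} ≤ C · sup{∑_{i=1}^m |g(β_i)| : g ∈ c₀*, ‖g‖ ≤ 1}; moreover C is the smallest constant with this property, i.e., π_1(E_α) = ∑_n ‖α_n‖_{ℓ_1}. -/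
noncomputable section

open ZeroAtInfty Filter Finset

/-! The upper bound holds for any operator of the form `T x = ∑ₙ fₙ(x) αₙ` with `‖fₙ‖ ≤ 1`:
each `‖T xᵢ‖` is at most `∑ₙ |fₙ(xᵢ)| ‖αₙ‖`, and for fixed `n` the sum `∑ᵢ |fₙ(xᵢ)|` is one of the
quantities whose supremum is the weak `ℓ₁` norm of the family. On `c₀` the `fₙ` are the coordinate
functionals. For optimality, test against the unit vectors `e₀, …, e_{m-1}`: they are sent to
`α₀, …, α_{m-1}`, and their weak `ℓ₁` norm is at most `1` because `∑ᵢ |g(eᵢ)| = g(∑ᵢ ±eᵢ)` and every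
signed sum of distinct unit vectors has sup norm at most `1`. -/

section WeakOneNorm

variable {X : Type*} [NormedAddCommGroup X] [NormedSpace ℝ X] {ι : Type*} [Fintype ι]

def weakOneNorm (x : ι → X) : ℝ :=
  sSup {t | ∃ g : StrongDual ℝ X, ‖g‖ ≤ 1 ∧ t = ∑ i, |g (x i)|}

lemma abs_apply_le_norm_of_norm_le_one {g : StrongDual ℝ X} (hg : ‖g‖ ≤ 1) (y : X) :
    |g y| ≤ ‖y‖ := by
  simpa using g.le_of_opNorm_le hg y

lemma sum_abs_le_weakOneNorm (x : ι → X) {g : StrongDual ℝ X} (hg : ‖g‖ ≤ 1) :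
    ∑ i, |g (x i)| ≤ weakOneNorm x := by
  refine le_csSup ⟨∑ i, ‖x i‖, ?_⟩ ⟨g, hg, rfl⟩
  rintro _ ⟨h, hh, rfl⟩
  exact sum_le_sum fun i _ => abs_apply_le_norm_of_norm_le_one hh (x i)

lemma weakOneNorm_le_of_norm_sum_smul_le (x : ι → X) {c : ℝ}
    (h : ∀ ε : ι → ℝ, (∀ i, |ε i| ≤ 1) → ‖∑ i, ε i • x i‖ ≤ c) : weakOneNorm x ≤ c := by
  refine csSup_le ⟨_, 0, by simp, rfl⟩ ?_
  rintro _ ⟨g, hg, rfl⟩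
  set ε : ι → ℝ := fun i => SignType.sign (g (x i))
  have hε : ∀ i, |ε i| ≤ 1 := fun i => by
    rcases lt_trichotomy (g (x i)) 0 with hx | hx | hx <;> simp [ε, hx]
  calc ∑ i, |g (x i)| = g (∑ i, ε i • x i) := by simp [ε, map_sum, sign_mul_self]
    _ ≤ ‖∑ i, ε i • x i‖ := (le_abs_self _).trans (abs_apply_le_norm_of_norm_le_one hg _)
    _ ≤ c := h ε hε

lemma sum_norm_le_tsum_norm_mul_weakOneNorm {Y : Type*} [NormedAddCommGroup Y] [NormedSpace ℝ Y]
    {f : ℕ → StrongDual ℝ X} (hf : ∀ n, ‖f n‖ ≤ 1) {α : ℕ → Y} (hα : Summable fun n => ‖α n‖)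
    {T : X → Y} (hT : ∀ x, HasSum (fun n => f n x • α n) (T x)) (x : ι → X) :
    ∑ i, ‖T (x i)‖ ≤ (∑' n, ‖α n‖) * weakOneNorm x := by
  have hs : ∀ i, Summable fun n => |f n (x i)| * ‖α n‖ := fun i =>
    (hα.mul_left ‖x i‖).of_nonneg_of_le (fun n => by positivity)
      (fun n => by gcongr; exact abs_apply_le_norm_of_norm_le_one (hf n) _)
  calc ∑ i, ‖T (x i)‖ ≤ ∑ i, ∑' n, |f n (x i)| * ‖α n‖ :=
        sum_le_sum fun i _ => (hT (x i)).norm_le_of_bounded (hs i).hasSum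
          fun n => by rw [norm_smul, Real.norm_eq_abs]
    _ = ∑' n, ∑ i, |f n (x i)| * ‖α n‖ := (Summable.tsum_finsetSum fun i _ => hs i).symm
    _ ≤ ∑' n, weakOneNorm x * ‖α n‖ :=
        Summable.tsum_le_tsum (fun n => by
            rw [← sum_mul]
            gcongr
            exact sum_abs_le_weakOneNorm x (hf n))
          (summable_sum fun i _ => hs i) (hα.mul_left _)
    _ = (∑' n, ‖α n‖) * weakOneNorm x := by rw [tsum_mul_left, mul_comm]

end WeakOneNorm

namespace ZeroAtInftyContinuousMap

variable {α : Type*} [TopologicalSpace α]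

lemma abs_apply_le_norm (β : C₀(α, ℝ)) (a : α) : |β a| ≤ ‖β‖ := by
  simpa using β.toBCF.norm_coe_le_norm a

lemma norm_le_of_forall_abs_le {β : C₀(α, ℝ)} {C : ℝ} (hC : 0 ≤ C) (h : ∀ a, |β a| ≤ C) :
    ‖β‖ ≤ C := by
  rw [← norm_toBCF_eq_norm]
  exact (BoundedContinuousFunction.norm_le hC).mpr (by simpa using h)

def evalCLM (a : α) : StrongDual ℝ C₀(α, ℝ) :=
  LinearMap.mkContinuous
    { toFun := fun β => β a
      map_add' := fun _ _ => rfl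
      map_smul' := fun _ _ => rfl } 1
    (fun β => by simpa using abs_apply_le_norm β a)

@[simp] lemma evalCLM_apply (a : α) (β : C₀(α, ℝ)) : evalCLM a β = β a := rfl

lemma norm_evalCLM_le (a : α) : ‖evalCLM a‖ ≤ 1 :=
  LinearMap.mkContinuous_norm_le _ zero_le_one _

variable [DiscreteTopology α] [DecidableEq α]

def single (a : α) : C₀(α, ℝ) :=
  ⟨⟨fun b => if a = b then 1 else 0, continuous_of_discreteTopology⟩,
    tendsto_const_nhds.congr' <| mem_cocompact.mpr
      ⟨{a}, isCompact_singleton, fun _ hb => (if_neg (Ne.symm hb)).symm⟩⟩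

@[simp] lemma single_apply (a b : α) : single a b = if a = b then 1 else 0 := rfl

lemma norm_sum_smul_single_le {ι : Type*} [Fintype ι] {k : ι → α} (hk : Function.Injective k)
    {ε : ι → ℝ} (hε : ∀ i, |ε i| ≤ 1) : ‖∑ i, ε i • single (k i)‖ ≤ 1 := by
  refine norm_le_of_forall_abs_le zero_le_one fun b => ?_
  have hcard : #{i | k i = b} ≤ 1 :=
    card_le_one.mpr fun i hi j hj => hk ((mem_filter.mp hi).2.trans (mem_filter.mp hj).2.symm)
  have hval : (∑ i, ε i • single (k i)) b = ∑ i with k i = b, ε i := by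
    rw [← evalCLM_apply, map_sum, sum_filter]
    simp
  calc |(∑ i, ε i • single (k i)) b| ≤ ∑ i with k i = b, |ε i| := hval ▸ abs_sum_le_sum_abs _ _
    _ ≤ #{i | k i = b} • (1 : ℝ) := sum_le_card_nsmul _ _ _ fun i _ => hε i
    _ ≤ 1 := by simpa using hcard

lemma weakOneNorm_single_le_one {ι : Type*} [Fintype ι] {k : ι → α} (hk : Function.Injective k) :
    weakOneNorm (fun i => single (k i)) ≤ 1 :=
  weakOneNorm_le_of_norm_sum_smul_le _ fun _ hε => norm_sum_smul_single_le hk hε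

end ZeroAtInftyContinuousMap

open ZeroAtInftyContinuousMap

lemma apply_single_eq_of_hasSum {Y : Type*} [AddCommGroup Y] [Module ℝ Y] [TopologicalSpace Y]
    [T2Space Y] {α : ℕ → Y} {E : C₀(ℕ, ℝ) → Y} (hE : ∀ β, HasSum (fun n => β n • α n) (E β))
    (i : ℕ) : E (single i) = α i :=
  (hE (single i)).unique <| (hasSum_ite_eq i (α i)).congr_fun fun n => by
    by_cases h : i = n <;> simp [h, eq_comm]

/-- If `⟨αₙ⟩` is a norm summable sequence in `ℓ_1` with sum of norms `C`, then the
operator `E_α : c₀ → ℓ_1`, `E_α β = ∑ₙ β(n) αₙ`, is absolutely `1`-summing with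
`π₁(E_α) = C`. -/
theorem stmt_17 (α : ℕ → lp (fun _ : ℕ => ℝ) 1)
    (hα : Summable fun n => ‖α n‖)
    (E : C₀(ℕ, ℝ) →L[ℝ] lp (fun _ : ℕ => ℝ) 1)
    (hE : ∀ β : C₀(ℕ, ℝ), HasSum (fun n => β n • α n) (E β)) :
    (∀ (m : ℕ) (β : Fin m → C₀(ℕ, ℝ)),
      ∑ i, ‖E (β i)‖ ≤ (∑' n, ‖α n‖) *
        sSup {t | ∃ g : StrongDual ℝ C₀(ℕ, ℝ), ‖g‖ ≤ 1 ∧ t = ∑ i, |g (β i)|}) ∧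
    ∀ c : ℝ, 0 ≤ c →
      (∀ (m : ℕ) (β : Fin m → C₀(ℕ, ℝ)),
        ∑ i, ‖E (β i)‖ ≤ c *
          sSup {t | ∃ g : StrongDual ℝ C₀(ℕ, ℝ), ‖g‖ ≤ 1 ∧ t = ∑ i, |g (β i)|}) →
      (∑' n, ‖α n‖) ≤ c := by
  refine ⟨fun m β => sum_norm_le_tsum_norm_mul_weakOneNorm norm_evalCLM_le hα hE β,
    fun c hc h => Real.tsum_le_of_sum_range_le (fun n => norm_nonneg _) fun m => ?_⟩
  calc ∑ n ∈ range m, ‖α n‖ = ∑ i : Fin m, ‖E (single (i : ℕ))‖ := by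
        simp [apply_single_eq_of_hasSum hE, Fin.sum_univ_eq_sum_range (fun n => ‖α n‖)]
    _ ≤ c * weakOneNorm (fun i : Fin m => single (i : ℕ)) := h m _
    _ ≤ c * 1 := by gcongr; exact weakOneNorm_single_le_one Fin.val_injective
    _ = c := mul_one c
end
end
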